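/- For a compact manifold P of dimension m with volume form μ and a singular (m-2)-cycle C, the bilinear map λ_C(X,Y) = ∫_C i_Y i_X μ defines a Lie algebra 2-cocycle on the Lie algebra of divergence free vector fields on P. -/
import Mathlib


/-!
STATEMENT 10: For a compact manifold P of dimension m with volume form μ and a
singular (m-2)-cycle C, the bilinear map λ_C(X,Y) = ∫_C i_Y i_X μ defines a Lie
algebra 2-cocycle on the Lie algebra of divergence free vector fields on P.

Abstract Cartan calculus with dim P = m = k + 3.  The cycle C is encoded by its
integration functional `intC` on (m-2)-forms, which vanishes on exact forms
(∂C = 0, i.e. Stokes over the cycle).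
-/

variable {Vec : Type*} [LieRing Vec] [LieAlgebra ℝ Vec]
variable {Form : ℕ → Type*} [∀ k, AddCommGroup (Form k)] [∀ k, Module ℝ (Form k)]
variable {k : ℕ}
variable (d : ∀ j, Form j →ₗ[ℝ] Form (j + 1))
variable (ι : ∀ j, Vec →ₗ[ℝ] Form (j + 1) →ₗ[ℝ] Form j)
variable (L : ∀ j, Vec →ₗ[ℝ] Form j →ₗ[ℝ] Form j)
variable (intC : Form (k + 1) →ₗ[ℝ] ℝ)

/-- λ_C(X,Y) = ∫_C i_Y i_X μ. -/
def lambdaC (μ : Form (k + 3)) (X Y : Vec) : ℝ :=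
  intC (ι (k + 1) Y (ι (k + 2) X μ))

theorem singular_cycle_gives_two_cocycle
    (hCartan : ∀ (j : ℕ) (X : Vec) (α : Form (j + 1)),
      L (j + 1) X α = d j (ι j X α) + ι (j + 1) X (d (j + 1) α))
    (hBracket : ∀ (j : ℕ) (X Y : Vec) (α : Form (j + 1)),
      ι j ⁅X, Y⁆ α = L j X (ι j Y α) - ι j Y (L (j + 1) X α))
    (hAnti : ∀ (X Y : Vec) (α : Form (k + 3)),
      ι (k + 1) X (ι (k + 2) Y α) = - ι (k + 1) Y (ι (k + 2) X α))
    -- C is a cycle: integration over C kills exact forms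
    (hCycle : ∀ β : Form k, intC (d k β) = 0)
    (μ : Form (k + 3)) (hclosed : d (k + 3) μ = 0) :
    -- antisymmetry
    (∀ X Y : Vec, L (k + 3) X μ = 0 → L (k + 3) Y μ = 0 →
      lambdaC ι intC μ X Y = - lambdaC ι intC μ Y X) ∧
    -- cocycle identity on divergence free vector fields
    (∀ X Y Z : Vec,
      L (k + 3) X μ = 0 → L (k + 3) Y μ = 0 → L (k + 3) Z μ = 0 →
      lambdaC ι intC μ ⁅X, Y⁆ Z + lambdaC ι intC μ ⁅Y, Z⁆ X
        + lambdaC ι intC μ ⁅Z, X⁆ Y = 0) := by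
  constructor
  · intro X Y _ _
    unfold lambdaC
    rw [hAnti Y X μ, map_neg]
  · intro X Y Z hX hY hZ
    -- d (ι X μ) = 0 for divergence free X
    have hdι : ∀ W : Vec, L (k + 3) W μ = 0 → d (k + 2) (ι (k + 2) W μ) = 0 := by
      intro W hW
      have h := hCartan (k + 2) W μ
      rw [hW, hclosed, map_zero, add_zero] at h
      exact h.symm
    -- ι ⁅X,Y⁆ μ is exact
    have hexact : ∀ A B : Vec, L (k + 3) A μ = 0 → L (k + 3) B μ = 0 →
        ι (k + 2) ⁅A, B⁆ μ = d (k + 1) (ι (k + 1) A (ι (k + 2) B μ)) := by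
      intro A B hA hB
      rw [hBracket (k + 2) A B μ, hA, map_zero, sub_zero,
        hCartan (k + 1) A (ι (k + 2) B μ), hdι B hB, map_zero, add_zero]
    -- key: λ(⁅A,B⁆,Cc) = λ(B,⁅Cc,A⁆) + λ(⁅Cc,B⁆,A)
    have key : ∀ A B Cc : Vec, L (k + 3) A μ = 0 → L (k + 3) B μ = 0 →
        L (k + 3) Cc μ = 0 →
        lambdaC ι intC μ ⁅A, B⁆ Cc
          = intC (ι (k + 1) ⁅Cc, A⁆ (ι (k + 2) B μ))
            + lambdaC ι intC μ ⁅Cc, B⁆ A := by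
      intro A B Cc hA hB hCc
      unfold lambdaC
      rw [hexact A B hA hB]
      have hC2 : ι (k + 1) Cc (d (k + 1) (ι (k + 1) A (ι (k + 2) B μ)))
          = L (k + 1) Cc (ι (k + 1) A (ι (k + 2) B μ))
            - d k (ι k Cc (ι (k + 1) A (ι (k + 2) B μ))) := by
        rw [hCartan k Cc (ι (k + 1) A (ι (k + 2) B μ))]; abel
      rw [hC2, map_sub, hCycle, sub_zero]
      have hL : L (k + 1) Cc (ι (k + 1) A (ι (k + 2) B μ))
          = ι (k + 1) ⁅Cc, A⁆ (ι (k + 2) B μ)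
            + ι (k + 1) A (L (k + 2) Cc (ι (k + 2) B μ)) := by
        rw [hBracket (k + 1) Cc A (ι (k + 2) B μ)]; abel
      rw [hL, map_add]
      have hLB : L (k + 2) Cc (ι (k + 2) B μ) = ι (k + 2) ⁅Cc, B⁆ μ := by
        rw [hBracket (k + 2) Cc B μ, hCc, map_zero, sub_zero]
      rw [hLB]
    have anti : ∀ A B : Vec,
        intC (ι (k + 1) B (ι (k + 2) A μ)) = - intC (ι (k + 1) A (ι (k + 2) B μ)) := by
      intro A B
      rw [hAnti B A μ, map_neg]
    have skew : ∀ A B Cc : Vec,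
        lambdaC ι intC μ ⁅A, B⁆ Cc = - lambdaC ι intC μ ⁅B, A⁆ Cc := by
      intro A B Cc
      unfold lambdaC
      rw [← lie_skew A B, map_neg, LinearMap.neg_apply, map_neg, map_neg]
    have e1 := key X Y Z hX hY hZ
    have e2 : intC (ι (k + 1) ⁅Z, X⁆ (ι (k + 2) Y μ))
        = - lambdaC ι intC μ ⁅Z, X⁆ Y := by
      unfold lambdaC; exact anti Y ⁅Z, X⁆
    have e3 := skew Z Y X
    have e4 : lambdaC ι intC μ ⁅Y, Z⁆ X = - lambdaC ι intC μ ⁅Z, Y⁆ X := skew Y Z X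
    rw [e2, e3] at e1
    linarith [e1, e4]
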